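/- Let x,y be vertices with d(x,y) = δ ≥ 2 and let l = lcm(d_x, d_y). Then the idleness function p ↦ κ_p(x,y) is linear on the interval [0, 1/(1+l)], i.e. every critical point p* of the idleness function satisfies p* ≥ 1/(1+l). -/

import Mathlib

/-!
Write `l = lcm(d_x, d_y)`, `q = 1/(1+l)` and `p = θ q` with `θ ∈ [0,1]`. Then
`μ_x^p = (1-θ) μ_x^0 + θ μ_x^q`, and mixing couplings gives `W₁(p) ≤ (1-θ) W₁(0) + θ W₁(q)`.
Conversely, every coupling of `μ_x^p` and `μ_y^p` contains `θ` times a coupling of `μ_x^q` and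
`μ_y^q`, the rest being `1-θ` times a coupling at idleness `0`. By the supply–demand theorem this
only needs every cut `(S, T)` to satisfy `μ_x^q(S) ≤ μ_y^q(T)` or `μ_y^0(T) ≤ μ_x^0(S)`, and that
holds because the masses of `μ^q` are multiples of `1/(1+l)` and those of `μ^0` multiples of
`1/l`. So `W₁`, and with it `κ_p`, is affine in `p` on `[0, q]`, and no critical point lies
below `q`.

On an infinite vertex set the sums `∑ᶠ` in the definition of `W₁` vanish on infinite supports;
there `W₁(p) = (1-p) |N(x) ∩ N(y)| max(0, 1/d_x - 1/d_y)`, again affine in `p`.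
-/

open scoped BigOperators

namespace OllivierLong

variable {V : Type*}

/-- A finitely supported probability distribution on `V`. -/
def IsProb (μ : V → ℝ) : Prop :=
  (∀ v, 0 ≤ μ v) ∧ (Function.support μ).Finite ∧ ∑ᶠ v, μ v = 1

/-- A coupling (transport plan) between two distributions. -/
def IsCoupling (μ₁ μ₂ : V → ℝ) (π : V → V → ℝ) : Prop :=
  (∀ x y, 0 ≤ π x y) ∧ (∀ x, ∑ᶠ y, π x y = μ₁ x) ∧ (∀ y, ∑ᶠ x, π x y = μ₂ y)

/-- The 1-Wasserstein distance w.r.t. the combinatorial graph distance. -/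
noncomputable def W1 (G : SimpleGraph V) (μ₁ μ₂ : V → ℝ) : ℝ :=
  sInf {r | ∃ π, IsCoupling μ₁ μ₂ π ∧ r = ∑ᶠ x, ∑ᶠ y, (G.dist x y : ℝ) * π x y}

/-- A real valued function is 1-Lipschitz w.r.t. the graph distance. -/
def Lip (G : SimpleGraph V) (φ : V → ℝ) : Prop :=
  ∀ u v, |φ u - φ v| ≤ G.dist u v

/-- An integer valued function is 1-Lipschitz w.r.t. the graph distance. -/
def IntLip (G : SimpleGraph V) (φ : V → ℤ) : Prop :=
  ∀ u v, |φ u - φ v| ≤ (G.dist u v : ℤ)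

open Classical in
/-- The lazy random walk measure with idleness `p` at `x`. -/
noncomputable def mu (G : SimpleGraph V) [G.LocallyFinite] (p : ℝ) (x : V) : V → ℝ :=
  fun z => if z = x then p else if G.Adj x z then (1 - p) / (G.degree x) else 0

/-- The `p`-Ollivier-Ricci curvature. -/
noncomputable def kappa (G : SimpleGraph V) [G.LocallyFinite] (p : ℝ) (x y : V) : ℝ :=
  1 - W1 G (mu G p x) (mu G p y) / (G.dist x y)

/-- `K` is the Lin–Lu–Yau curvature of the pair `(x, y)`:
the limit of `κ_p(x,y)/(1-p)` as `p → 1⁻`. -/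
def IsLLY (G : SimpleGraph V) [G.LocallyFinite] (x y : V) (K : ℝ) : Prop :=
  Filter.Tendsto (fun p => kappa G p x y / (1 - p)) (nhdsWithin 1 (Set.Iio 1)) (nhds K)

section Transport

variable {α β : Type*}

def IsSubflow [Fintype α] [Fintype β] (π : α → β → ℝ) (r : α → ℝ) (c : β → ℝ)
    (τ : α → β → ℝ) : Prop :=
  (∀ a b, 0 ≤ τ a b ∧ τ a b ≤ π a b) ∧ (∀ a, ∑ b, τ a b ≤ r a) ∧ ∀ b, ∑ a, τ a b ≤ c b

lemma isCompact_setOf_isSubflow [Fintype α] [Fintype β] (π : α → β → ℝ) (r : α → ℝ)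
    (c : β → ℝ) : IsCompact {τ | IsSubflow π r c τ} := by
  have hbox : IsCompact (Set.univ.pi fun a => Set.univ.pi fun b => Set.Icc (0 : ℝ) (π a b)) :=
    isCompact_univ_pi fun a => isCompact_univ_pi fun b => isCompact_Icc
  refine hbox.of_isClosed_subset ?_ fun τ hτ =>
    Set.mem_univ_pi.2 fun a => Set.mem_univ_pi.2 fun b => hτ.1 a b
  have hcont : ∀ a b, Continuous fun τ : α → β → ℝ => τ a b := fun a b => by fun_prop
  simp only [IsSubflow, Set.ofPred_and, Set.ofPred_forall]
  refine .inter (isClosed_iInter fun a => isClosed_iInter fun b => ?_) (.inter ?_ ?_)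
  · exact (isClosed_le continuous_const (hcont a b)).inter
      (isClosed_le (hcont a b) continuous_const)
  · exact isClosed_iInter fun a =>
      isClosed_le (continuous_finsetSum _ fun b _ => hcont a b) continuous_const
  · exact isClosed_iInter fun b =>
      isClosed_le (continuous_finsetSum _ fun a _ => hcont a b) continuous_const

def deficit [Fintype α] [Fintype β] (r : α → ℝ) (τ : α → β → ℝ) : ℝ :=
  ∑ a, (r a - ∑ b, τ a b) ^ 2

def addAt [DecidableEq α] [DecidableEq β] (τ : α → β → ℝ) (a : α) (b : β) (γ : ℝ) :
    α → β → ℝ :=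
  fun i j => τ i j + if i = a ∧ j = b then γ else 0

section addAt

variable [DecidableEq α] [DecidableEq β] (τ : α → β → ℝ) (a : α) (b : β) (γ : ℝ)

lemma sum_addAt_row [Fintype β] (i : α) :
    ∑ j, addAt τ a b γ i j = ∑ j, τ i j + if i = a then γ else 0 := by
  by_cases hi : i = a <;> simp [addAt, Finset.sum_add_distrib, hi]

lemma sum_addAt_col [Fintype α] (j : β) :
    ∑ i, addAt τ a b γ i j = ∑ i, τ i j + if j = b then γ else 0 := by
  by_cases hj : j = b <;> simp [addAt, Finset.sum_add_distrib, hj]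

lemma deficit_addAt [Fintype α] [Fintype β] (r : α → ℝ) :
    deficit r (addAt τ a b γ) = deficit r τ + γ * (γ - 2 * (r a - ∑ j, τ a j)) := by
  have h : ∀ i, (r i - ∑ j, addAt τ a b γ i j) ^ 2
      = (r i - ∑ j, τ i j) ^ 2 + if i = a then γ * (γ - 2 * (r a - ∑ j, τ a j)) else 0 := by
    intro i
    rw [sum_addAt_row]
    split_ifs with hi
    · subst hi; ring
    · ring
  simp only [deficit, h, Finset.sum_add_distrib, Finset.sum_ite_eq', Finset.mem_univ, if_true]

lemma isSubflow_addAt [Fintype α] [Fintype β] {π : α → β → ℝ} {r : α → ℝ} {c : β → ℝ}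
    (hτ : IsSubflow π r c τ) (h0 : 0 ≤ τ a b + γ) (hπ : τ a b + γ ≤ π a b)
    (hr : ∑ j, τ a j + γ ≤ r a) (hc : ∑ i, τ i b + γ ≤ c b) : IsSubflow π r c (addAt τ a b γ) := by
  refine ⟨fun i j => ?_, fun i => ?_, fun j => ?_⟩
  · by_cases h : i = a ∧ j = b
    · obtain ⟨rfl, rfl⟩ := h
      simpa [addAt] using And.intro h0 hπ
    · simpa [addAt, h] using hτ.1 i j
  · rw [sum_addAt_row]
    split_ifs with hi
    · exact hi ▸ hr
    · simpa using hτ.2.1 i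
  · rw [sum_addAt_col]
    split_ifs with hj
    · exact hj ▸ hc
    · simpa using hτ.2.2 j

end addAt

section Flow

variable [Fintype α] [Fintype β] {π : α → β → ℝ} {r : α → ℝ} {c : β → ℝ} {τ : α → β → ℝ}

lemma IsSubflow.sum_col_eq_of_isMinOn [DecidableEq α] [DecidableEq β] (hτ : IsSubflow π r c τ)
    (hmin : IsMinOn (deficit r) {τ | IsSubflow π r c τ} τ) {a : α} {b : β}
    (ha : ∑ j, τ a j < r a) (hab : τ a b < π a b) : ∑ i, τ i b = c b := by
  by_contra hb
  have hb : ∑ i, τ i b < c b := lt_of_le_of_ne (hτ.2.2 b) hb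
  set γ := min (r a - ∑ j, τ a j) (min (π a b - τ a b) (c b - ∑ i, τ i b))
  have hγ : 0 < γ := lt_min (by linarith) (lt_min (by linarith) (by linarith))
  have h1 : γ ≤ r a - ∑ j, τ a j := min_le_left _ _
  have h2 : γ ≤ π a b - τ a b := (min_le_right _ _).trans (min_le_left _ _)
  have h3 : γ ≤ c b - ∑ i, τ i b := (min_le_right _ _).trans (min_le_right _ _)
  have hmem := isSubflow_addAt τ a b γ hτ (by linarith [(hτ.1 a b).1]) (by linarith)
    (by linarith) (by linarith)
  have := isMinOn_iff.1 hmin _ hmem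
  rw [deficit_addAt] at this
  nlinarith

lemma IsSubflow.eq_zero_of_isMinOn [DecidableEq α] [DecidableEq β] (hτ : IsSubflow π r c τ)
    (hmin : IsMinOn (deficit r) {τ | IsSubflow π r c τ} τ) {a a' : α} {b : β}
    (ha : ∑ j, τ a j < r a) (hab : τ a b < π a b) (ha' : ∑ j, τ a' j = r a') :
    τ a' b = 0 := by
  have hne : a' ≠ a := by rintro rfl; linarith
  by_contra h0
  have h0 : 0 < τ a' b := lt_of_le_of_ne (hτ.1 a' b).1 (Ne.symm h0)
  set γ := min ((r a - ∑ j, τ a j) / 2) (min (π a b - τ a b) (τ a' b))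
  have hγ : 0 < γ := lt_min (by linarith) (lt_min (by linarith) h0)
  have h1 : γ ≤ (r a - ∑ j, τ a j) / 2 := min_le_left _ _
  have h2 : γ ≤ π a b - τ a b := (min_le_right _ _).trans (min_le_left _ _)
  have h3 : γ ≤ τ a' b := (min_le_right _ _).trans (min_le_right _ _)
  -- move `γ` units of column `b` from the saturated row `a'` to the deficient row `a`
  have hmem₁ := isSubflow_addAt τ a' b (-γ) hτ (by linarith) (by linarith [(hτ.1 a' b).2])
    (by linarith) (by linarith [hτ.2.2 b])
  have hrow : ∑ j, addAt τ a' b (-γ) a j = ∑ j, τ a j := by simp [sum_addAt_row, hne.symm]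
  have hmem₂ := isSubflow_addAt _ a b γ hmem₁
    (by simp [addAt, hne.symm]; linarith [(hτ.1 a b).1]) (by simp [addAt, hne.symm]; linarith)
    (by linarith)
    (by simp only [sum_addAt_col, if_true]; linarith [hτ.2.2 b])
  have := isMinOn_iff.1 hmin _ hmem₂
  rw [deficit_addAt, deficit_addAt, hrow, ha'] at this
  nlinarith

/-- A minimiser of the squared deficit saturates all rows: otherwise the deficient rows `S`,
together with the columns `T` they can still send to, form an overloaded cut. -/
lemma IsSubflow.sum_row_eq_of_isMinOn [DecidableEq β] (hτ : IsSubflow π r c τ)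
    (hmin : IsMinOn (deficit r) {τ | IsSubflow π r c τ} τ)
    (hcut : ∀ (S : Finset α) (T : Finset β),
      ∑ a ∈ S, r a ≤ ∑ a ∈ S, ∑ b ∈ Tᶜ, π a b + ∑ b ∈ T, c b) (a : α) :
    ∑ b, τ a b = r a := by
  classical
  by_contra! h
  set S := Finset.univ.filter fun a => ∑ b, τ a b < r a
  set T := Finset.univ.filter fun b => ∃ a ∈ S, τ a b < π a b
  have hS : S.Nonempty := ⟨a, by simpa [S] using lt_of_le_of_ne (hτ.2.1 a) h⟩
  have hST : ∀ a ∈ S, ∀ b ∈ Tᶜ, τ a b = π a b := fun a ha b hb =>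
    le_antisymm (hτ.1 a b).2 (by
      simp only [T, Finset.mem_compl, Finset.mem_filter, Finset.mem_univ, true_and, not_exists,
        not_and, not_lt] at hb
      exact hb a ha)
  have hT : ∀ b ∈ T, ∑ a ∈ S, τ a b = c b := by
    intro b hb
    obtain ⟨a, ha, hab⟩ := (Finset.mem_filter.1 hb).2
    have ha' : ∑ j, τ a j < r a := (Finset.mem_filter.1 ha).2
    rw [← hτ.sum_col_eq_of_isMinOn hmin ha' hab, ← Finset.sum_subset (Finset.subset_univ S)]
    intro a' _ ha'S
    exact hτ.eq_zero_of_isMinOn hmin ha' hab (le_antisymm (hτ.2.1 a') (by simpa [S] using ha'S))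
  have hlt := Finset.sum_lt_sum_of_nonempty hS fun a ha => (Finset.mem_filter.1 ha).2
  have hsplit : ∑ a ∈ S, ∑ b, τ a b = ∑ b ∈ T, ∑ a ∈ S, τ a b + ∑ a ∈ S, ∑ b ∈ Tᶜ, π a b := by
    rw [Finset.sum_comm (s := T),
      ← Finset.sum_congr rfl fun a ha => Finset.sum_congr rfl (hST a ha), ← Finset.sum_add_distrib]
    exact Finset.sum_congr rfl fun a _ => (Finset.sum_add_sum_compl T _).symm
  rw [hsplit, Finset.sum_congr rfl hT] at hlt
  linarith [hcut S T]

/-- Gale's supply–demand theorem. -/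
theorem exists_flow_of_cut [DecidableEq β] (hπ : ∀ a b, 0 ≤ π a b) (hr : ∀ a, 0 ≤ r a)
    (hc : ∀ b, 0 ≤ c b) (htot : ∑ a, r a = ∑ b, c b)
    (hcut : ∀ (S : Finset α) (T : Finset β),
      ∑ a ∈ S, r a ≤ ∑ a ∈ S, ∑ b ∈ Tᶜ, π a b + ∑ b ∈ T, c b) :
    ∃ τ : α → β → ℝ, (∀ a b, 0 ≤ τ a b ∧ τ a b ≤ π a b) ∧ (∀ a, ∑ b, τ a b = r a) ∧
      ∀ b, ∑ a, τ a b = c b := by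
  have h0 : IsSubflow π r c 0 :=
    ⟨fun a b => ⟨le_rfl, hπ a b⟩, by simpa using hr, by simpa using hc⟩
  obtain ⟨τ, hτ, hmin⟩ := (isCompact_setOf_isSubflow π r c).exists_isMinOn ⟨0, h0⟩
    (by unfold deficit; fun_prop : Continuous (deficit (β := β) r)).continuousOn
  have hrows := hτ.sum_row_eq_of_isMinOn hmin hcut
  have hcols : ∑ b, ∑ a, τ a b = ∑ b, c b := by
    rw [Finset.sum_comm, Finset.sum_congr rfl fun a _ => hrows a, htot]
  exact ⟨τ, hτ.1, hrows, fun b => (Finset.sum_eq_sum_iff_of_le fun b _ => hτ.2.2 b).1 hcols b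
    (Finset.mem_univ b)⟩

end Flow

end Transport

lemma exists_subflow_of_mix {α β : Type*} [Fintype α] [Fintype β] [DecidableEq β]
    {μ μ₀ μ₁ : α → ℝ} {ν ν₀ ν₁ : β → ℝ} {θ : ℝ} (hθ0 : 0 ≤ θ) (hθ1 : θ ≤ 1)
    (hμ : ∀ a, μ a = (1 - θ) * μ₀ a + θ * μ₁ a) (hν : ∀ b, ν b = (1 - θ) * ν₀ b + θ * ν₁ b)
    (hμ₁ : ∀ a, 0 ≤ μ₁ a) (hν₁ : ∀ b, 0 ≤ ν₁ b) (htot : ∑ a, μ₁ a = ∑ b, ν₁ b)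
    (hcompat : ∀ (S : Finset α) (T : Finset β),
      ∑ a ∈ S, μ₁ a ≤ ∑ b ∈ T, ν₁ b ∨ ∑ b ∈ T, ν₀ b ≤ ∑ a ∈ S, μ₀ a)
    {π : α → β → ℝ} (hπ : ∀ a b, 0 ≤ π a b) (hrow : ∀ a, ∑ b, π a b = μ a)
    (hcol : ∀ b, ∑ a, π a b = ν b) :
    ∃ τ : α → β → ℝ, (∀ a b, 0 ≤ τ a b ∧ τ a b ≤ π a b) ∧ (∀ a, ∑ b, τ a b = θ * μ₁ a) ∧
      ∀ b, ∑ a, τ a b = θ * ν₁ b := by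
  refine exists_flow_of_cut hπ (fun a => mul_nonneg hθ0 (hμ₁ a)) (fun b => mul_nonneg hθ0 (hν₁ b))
    (by rw [← Finset.mul_sum, ← Finset.mul_sum, htot]) fun S T => ?_
  have hout : ∑ a ∈ S, μ a - ∑ b ∈ T, ν b ≤ ∑ a ∈ S, ∑ b ∈ Tᶜ, π a b := by
    have hin : ∑ a ∈ S, ∑ b ∈ T, π a b ≤ ∑ b ∈ T, ν b := by
      rw [Finset.sum_comm]
      exact Finset.sum_le_sum fun b _ => hcol b ▸
        Finset.sum_le_sum_of_subset_of_nonneg (Finset.subset_univ S) fun a _ _ => hπ a b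
    have hsplit : ∑ a ∈ S, μ a = ∑ a ∈ S, ∑ b ∈ T, π a b + ∑ a ∈ S, ∑ b ∈ Tᶜ, π a b := by
      rw [← Finset.sum_add_distrib]
      exact Finset.sum_congr rfl fun a _ => by rw [Finset.sum_add_sum_compl, hrow]
    linarith
  have hmix : ∑ a ∈ S, μ a - ∑ b ∈ T, ν b = (1 - θ) * (∑ a ∈ S, μ₀ a - ∑ b ∈ T, ν₀ b)
      + θ * (∑ a ∈ S, μ₁ a - ∑ b ∈ T, ν₁ b) := by
    simp only [hμ, hν, Finset.sum_add_distrib, ← Finset.mul_sum]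
    ring
  have hπS : 0 ≤ ∑ a ∈ S, ∑ b ∈ Tᶜ, π a b :=
    Finset.sum_nonneg fun a _ => Finset.sum_nonneg fun b _ => hπ a b
  rw [← Finset.mul_sum, ← Finset.mul_sum]
  rcases hcompat S T with h | h
  · nlinarith
  · nlinarith

lemma isCoupling_iff [Fintype V] {μ ν : V → ℝ} {π : V → V → ℝ} :
    IsCoupling μ ν π ↔
      (∀ x y, 0 ≤ π x y) ∧ (∀ x, ∑ y, π x y = μ x) ∧ ∀ y, ∑ x, π x y = ν y := by
  simp only [IsCoupling, finsum_eq_sum_of_fintype]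

lemma IsProb.sum_eq_one [Fintype V] {μ : V → ℝ} (h : IsProb μ) : ∑ v, μ v = 1 := by
  rw [← finsum_eq_sum_of_fintype]
  exact h.2.2

lemma IsProb.exists_isCoupling {μ ν : V → ℝ} (hμ : IsProb μ) (hν : IsProb ν) :
    ∃ π, IsCoupling μ ν π :=
  ⟨fun x y => μ x * ν y, fun x y => mul_nonneg (hμ.1 x) (hν.1 y),
    fun x => by rw [← mul_finsum, hν.2.2, mul_one], fun y => by rw [← finsum_mul, hμ.2.2, one_mul]⟩

section Coupling

variable (G : SimpleGraph V)

noncomputable def cost (π : V → V → ℝ) : ℝ :=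
  ∑ᶠ x, ∑ᶠ y, (G.dist x y : ℝ) * π x y

def couplingCosts (μ ν : V → ℝ) : Set ℝ :=
  {r | ∃ π, IsCoupling μ ν π ∧ r = cost G π}

lemma cost_nonneg {π : V → V → ℝ} (hπ : ∀ x y, 0 ≤ π x y) : 0 ≤ cost G π :=
  finsum_nonneg fun x => finsum_nonneg fun y => mul_nonneg (Nat.cast_nonneg _) (hπ x y)

lemma bddBelow_couplingCosts (μ ν : V → ℝ) : BddBelow (couplingCosts G μ ν) :=
  ⟨0, by rintro _ ⟨π, hπ, rfl⟩; exact cost_nonneg G hπ.1⟩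

lemma W1_le_cost {μ ν : V → ℝ} {π : V → V → ℝ} (hπ : IsCoupling μ ν π) :
    W1 G μ ν ≤ cost G π :=
  csInf_le (bddBelow_couplingCosts G μ ν) ⟨π, hπ, rfl⟩

lemma le_W1 {μ ν : V → ℝ} {w : ℝ} (hne : ∃ π, IsCoupling μ ν π)
    (h : ∀ π, IsCoupling μ ν π → w ≤ cost G π) : w ≤ W1 G μ ν := by
  obtain ⟨π, hπ⟩ := hne
  exact le_csInf ⟨_, π, hπ, rfl⟩ (by rintro _ ⟨π, hπ, rfl⟩; exact h π hπ)

section Finite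

variable [Fintype V]

lemma cost_eq_sum (π : V → V → ℝ) : cost G π = ∑ x, ∑ y, (G.dist x y : ℝ) * π x y := by
  simp only [cost, finsum_eq_sum_of_fintype]

variable {μ ν μ₀ ν₀ μ₁ ν₁ : V → ℝ} {θ : ℝ}

open scoped Pointwise in
lemma W1_le_mix (hθ0 : 0 ≤ θ) (hθ1 : θ ≤ 1) (hμ : ∀ x, μ x = (1 - θ) * μ₀ x + θ * μ₁ x)
    (hν : ∀ y, ν y = (1 - θ) * ν₀ y + θ * ν₁ y) (h₀ : ∃ π, IsCoupling μ₀ ν₀ π)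
    (h₁ : ∃ π, IsCoupling μ₁ ν₁ π) :
    W1 G μ ν ≤ (1 - θ) * W1 G μ₀ ν₀ + θ * W1 G μ₁ ν₁ := by
  have hne : ∀ {μ ν : V → ℝ}, (∃ π, IsCoupling μ ν π) → (couplingCosts G μ ν).Nonempty :=
    fun ⟨π, hπ⟩ => ⟨_, π, hπ, rfl⟩
  have hsub : (1 - θ) • couplingCosts G μ₀ ν₀ + θ • couplingCosts G μ₁ ν₁ ⊆
      couplingCosts G μ ν := by
    simp only [Set.subset_def, Set.mem_add, Set.mem_smul_set]
    rintro _ ⟨_, ⟨_, ⟨π₀, hπ₀, rfl⟩, rfl⟩, _, ⟨_, ⟨π₁, hπ₁, rfl⟩, rfl⟩, rfl⟩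
    obtain ⟨h0, hr0, hc0⟩ := isCoupling_iff.1 hπ₀
    obtain ⟨h1, hr1, hc1⟩ := isCoupling_iff.1 hπ₁
    refine ⟨fun x y => (1 - θ) * π₀ x y + θ * π₁ x y,
      isCoupling_iff.2 ⟨fun x y => ?_, fun x => ?_, fun y => ?_⟩, ?_⟩
    · have := h0 x y; have := h1 x y; nlinarith
    · simp only [Finset.sum_add_distrib, ← Finset.mul_sum, hr0, hr1, hμ]
    · simp only [Finset.sum_add_distrib, ← Finset.mul_sum, hc0, hc1, hν]
    · simp only [cost_eq_sum, smul_eq_mul, Finset.mul_sum, ← Finset.sum_add_distrib]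
      exact Finset.sum_congr rfl fun x _ => Finset.sum_congr rfl fun y _ => by ring
  calc W1 G μ ν ≤ sInf ((1 - θ) • couplingCosts G μ₀ ν₀ + θ • couplingCosts G μ₁ ν₁) :=
        csInf_le_csInf (bddBelow_couplingCosts G μ ν) ((hne h₀).smul_set.add (hne h₁).smul_set)
          hsub
    _ = (1 - θ) * W1 G μ₀ ν₀ + θ * W1 G μ₁ ν₁ := by
        rw [csInf_add (hne h₀).smul_set ((bddBelow_couplingCosts G μ₀ ν₀).smul_of_nonneg
          (by linarith)) (hne h₁).smul_set ((bddBelow_couplingCosts G μ₁ ν₁).smul_of_nonneg hθ0),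
          Real.sInf_smul_of_nonneg (by linarith), Real.sInf_smul_of_nonneg hθ0]
        rfl

lemma mix_le_W1 (hθ0 : 0 < θ) (hθ1 : θ < 1) (hne : ∃ π, IsCoupling μ ν π)
    (hsplit : ∀ π, IsCoupling μ ν π → ∃ τ : V → V → ℝ, (∀ x y, 0 ≤ τ x y ∧ τ x y ≤ π x y) ∧
      (∀ x, ∑ y, τ x y = θ * μ₁ x) ∧ ∀ y, ∑ x, τ x y = θ * ν₁ y)
    (hμ : ∀ x, μ x = (1 - θ) * μ₀ x + θ * μ₁ x) (hν : ∀ y, ν y = (1 - θ) * ν₀ y + θ * ν₁ y) :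
    (1 - θ) * W1 G μ₀ ν₀ + θ * W1 G μ₁ ν₁ ≤ W1 G μ ν := by
  refine le_W1 G hne fun π hπ => ?_
  obtain ⟨τ, hτ, hτr, hτc⟩ := hsplit π hπ
  obtain ⟨hπ0, hπr, hπc⟩ := isCoupling_iff.1 hπ
  have h1θ : 0 < 1 - θ := by linarith
  have h₀ : IsCoupling μ₀ ν₀ fun x y => (π x y - τ x y) / (1 - θ) := by
    refine isCoupling_iff.2 ⟨fun x y => div_nonneg (by linarith [hτ x y]) h1θ.le, fun x => ?_,
      fun y => ?_⟩
    · rw [← Finset.sum_div, Finset.sum_sub_distrib, hπr, hτr, hμ]; field_simp; ring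
    · rw [← Finset.sum_div, Finset.sum_sub_distrib, hπc, hτc, hν]; field_simp; ring
  have h₁ : IsCoupling μ₁ ν₁ fun x y => τ x y / θ := by
    refine isCoupling_iff.2 ⟨fun x y => div_nonneg (hτ x y).1 hθ0.le, fun x => ?_, fun y => ?_⟩
    · rw [← Finset.sum_div, hτr]; field_simp
    · rw [← Finset.sum_div, hτc]; field_simp
  calc (1 - θ) * W1 G μ₀ ν₀ + θ * W1 G μ₁ ν₁
      ≤ (1 - θ) * cost G (fun x y => (π x y - τ x y) / (1 - θ)) +
          θ * cost G (fun x y => τ x y / θ) :=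
        add_le_add (mul_le_mul_of_nonneg_left (W1_le_cost G h₀) h1θ.le)
          (mul_le_mul_of_nonneg_left (W1_le_cost G h₁) hθ0.le)
    _ = cost G π := by
        simp only [cost_eq_sum, Finset.mul_sum, ← Finset.sum_add_distrib]
        refine Finset.sum_congr rfl fun x _ => Finset.sum_congr rfl fun y _ => ?_
        field_simp
        ring

end Finite

end Coupling

section LazyWalk

variable (G : SimpleGraph V) [G.LocallyFinite]

lemma mu_of_adj (p : ℝ) {x z : V} (h : G.Adj x z) : mu G p x z = (1 - p) / G.degree x := by
  simp [mu, h, h.ne']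

lemma mu_of_not_adj (p : ℝ) {x z : V} (hz : z ≠ x) (h : ¬G.Adj x z) : mu G p x z = 0 := by
  simp [mu, hz, h]

lemma mu_nonneg {p : ℝ} (hp0 : 0 ≤ p) (hp1 : p ≤ 1) (x z : V) : 0 ≤ mu G p x z := by
  unfold mu
  split_ifs
  · exact hp0
  · exact div_nonneg (by linarith) (Nat.cast_nonneg _)
  · exact le_rfl

lemma mu_mix {p q θ : ℝ} (h : p = θ * q) (x z : V) :
    mu G p x z = (1 - θ) * mu G 0 x z + θ * mu G q x z := by
  unfold mu
  split_ifs <;> subst h <;> ring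

open Classical in
lemma sum_mu (p : ℝ) (x : V) (S : Finset V) :
    ∑ z ∈ S, mu G p x z =
      (if x ∈ S then p else 0) + (S.filter (G.Adj x)).card * ((1 - p) / G.degree x) := by
  have h : ∀ z, mu G p x z =
      (if z = x then p else 0) + if G.Adj x z then (1 - p) / G.degree x else 0 := by
    intro z
    by_cases hz : z = x
    · subst hz; simp [mu]
    · simp [mu, hz]
  simp only [h, Finset.sum_add_distrib, Finset.sum_ite_eq', ← Finset.sum_filter, Finset.sum_const,
    nsmul_eq_mul]

lemma isProb_mu {p : ℝ} (hp0 : 0 ≤ p) (hp1 : p ≤ 1) {x : V} (hx : 0 < G.degree x) :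
    IsProb (mu G p x) := by
  classical
  have hsupp : Function.support (mu G p x) ⊆ ↑(insert x (G.neighborFinset x)) := by
    intro z hz
    by_contra hzK
    simp only [Finset.coe_insert, Set.mem_insert_iff, Finset.mem_coe,
      SimpleGraph.mem_neighborFinset, not_or] at hzK
    exact hz (mu_of_not_adj G p hzK.1 hzK.2)
  refine ⟨mu_nonneg G hp0 hp1 x, (Finset.finite_toSet _).subset hsupp, ?_⟩
  have hN : (insert x (G.neighborFinset x)).filter (G.Adj x) = G.neighborFinset x := by
    ext z
    simp only [Finset.mem_filter, Finset.mem_insert, SimpleGraph.mem_neighborFinset]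
    exact ⟨fun h => h.2, fun h => ⟨Or.inr h, h⟩⟩
  rw [finsum_eq_sum_of_support_subset _ hsupp, sum_mu, if_pos (Finset.mem_insert_self _ _), hN,
    SimpleGraph.card_neighborFinset_eq_degree]
  field_simp
  ring

open Classical in
lemma sum_mu_mul_eq_nat {x : V} (m : ℕ) (hm : G.degree x ∣ m) (hx : 0 < G.degree x)
    (S : Finset V) :
    ∃ n : ℕ, (m : ℝ) * ∑ z ∈ S, mu G 0 x z = n ∧
      (1 + (m : ℝ)) * ∑ z ∈ S, mu G (1 / (1 + (m : ℝ))) x z = (if x ∈ S then 1 else 0) + n := by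
  obtain ⟨k, rfl⟩ := hm
  refine ⟨(S.filter (G.Adj x)).card * k, ?_, ?_⟩
  all_goals
    rw [sum_mu]
    have : (G.degree x : ℝ) ≠ 0 := by positivity
    have : 1 + (G.degree x : ℝ) * k ≠ 0 := by positivity
    push_cast
    split_ifs <;> field_simp <;> ring

end LazyWalk

section FiniteGraph

variable [Fintype V] (G : SimpleGraph V) [G.LocallyFinite]

open Classical in
lemma mu_lcm_dichotomy {x y : V} (hx : 0 < G.degree x) (hy : 0 < G.degree y)
    (S T : Finset V) :
    ∑ z ∈ S, mu G (1 / (1 + (Nat.lcm (G.degree x) (G.degree y) : ℝ))) x z ≤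
        ∑ z ∈ T, mu G (1 / (1 + (Nat.lcm (G.degree x) (G.degree y) : ℝ))) y z ∨
      ∑ z ∈ T, mu G 0 y z ≤ ∑ z ∈ S, mu G 0 x z := by
  set l := Nat.lcm (G.degree x) (G.degree y)
  have hl : (0 : ℝ) < l := by exact_mod_cast Nat.lcm_pos hx hy
  have hq1 : 1 / (1 + (l : ℝ)) ≤ 1 := by rw [div_le_one (by positivity)]; linarith
  have hT : ∀ p, 0 ≤ p → p ≤ 1 → ∑ z ∈ T, mu G p y z = 1 - ∑ z ∈ Tᶜ, mu G p y z :=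
    fun p hp0 hp1 => by
      rw [← (isProb_mu G hp0 hp1 hy).sum_eq_one, ← Finset.sum_add_sum_compl T, add_sub_cancel_right]
  obtain ⟨n₁, h₁, h₁'⟩ := sum_mu_mul_eq_nat G l (Nat.dvd_lcm_left _ _) hx S
  obtain ⟨n₂, h₂, h₂'⟩ := sum_mu_mul_eq_nat G l (Nat.dvd_lcm_right _ _) hy Tᶜ
  by_contra! h
  rw [hT _ (by positivity) hq1, hT 0 le_rfl zero_le_one] at h
  -- `l < n₁ + n₂ + 1` from the first failed inequality, `n₁ + n₂ < l` from the second
  have hlt : (l : ℝ) < n₁ + n₂ + 1 := by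
    have := mul_lt_mul_of_pos_left (show (1 : ℝ) < ∑ z ∈ S, mu G (1 / (1 + (l : ℝ))) x z +
      ∑ z ∈ Tᶜ, mu G (1 / (1 + (l : ℝ))) y z by linarith [h.1]) (show (0 : ℝ) < 1 + l by positivity)
    rw [mul_add, h₁', h₂'] at this
    split_ifs at this <;> linarith
  have hgt : (n₁ + n₂ : ℝ) < l := by nlinarith [h.2]
  have : l < n₁ + n₂ + 1 := by exact_mod_cast hlt
  have : n₁ + n₂ < l := by exact_mod_cast hgt
  omega

theorem W1_mu_eq_chord {x y : V} (hx : 0 < G.degree x) (hy : 0 < G.degree y) {p : ℝ}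
    (hp0 : 0 ≤ p) (hpq : p ≤ 1 / (1 + (Nat.lcm (G.degree x) (G.degree y) : ℝ))) :
    W1 G (mu G p x) (mu G p y) =
      (1 - p * (1 + (Nat.lcm (G.degree x) (G.degree y) : ℝ))) * W1 G (mu G 0 x) (mu G 0 y) +
        p * (1 + (Nat.lcm (G.degree x) (G.degree y) : ℝ)) *
          W1 G (mu G (1 / (1 + (Nat.lcm (G.degree x) (G.degree y) : ℝ))) x)
            (mu G (1 / (1 + (Nat.lcm (G.degree x) (G.degree y) : ℝ))) y) := by
  classical
  set l : ℝ := (Nat.lcm (G.degree x) (G.degree y) : ℝ)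
  set q := 1 / (1 + l)
  set θ := p * (1 + l)
  have hl : 0 < 1 + l := by positivity
  have hq1 : q ≤ 1 := div_le_one_of_le₀ (le_add_of_nonneg_right (Nat.cast_nonneg _)) hl.le
  have hθ0 : 0 ≤ θ := by positivity
  have hθ1 : θ ≤ 1 := by rwa [le_div_iff₀ hl] at hpq
  have hp : p = θ * q := by simp only [θ, q]; field_simp
  have hmix : ∀ v z, mu G p v z = (1 - θ) * mu G 0 v z + θ * mu G q v z := fun v => mu_mix G hp v
  have hcoupling : ∀ r, 0 ≤ r → r ≤ 1 → ∃ π, IsCoupling (mu G r x) (mu G r y) π :=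
    fun r h0 h1 => (isProb_mu G h0 h1 hx).exists_isCoupling (isProb_mu G h0 h1 hy)
  refine le_antisymm (W1_le_mix G hθ0 hθ1 (hmix x) (hmix y) (hcoupling 0 le_rfl zero_le_one)
    (hcoupling q (by positivity) hq1)) ?_
  rcases hθ0.eq_or_lt with hθ | hθ
  · rw [← hθ, show p = 0 by simpa [← hθ] using hp]
    simp
  rcases hθ1.eq_or_lt with hθ' | hθ'
  · rw [hθ', show p = q by simpa [hθ'] using hp]
    simp
  refine mix_le_W1 G hθ hθ' (hcoupling p hp0 (by nlinarith)) (fun π hπ => ?_) (hmix x) (hmix y)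
  obtain ⟨hπ0, hπr, hπc⟩ := isCoupling_iff.1 hπ
  exact exists_subflow_of_mix hθ0 hθ1 (hmix x) (hmix y) (mu_nonneg G (by positivity) hq1 x)
    (mu_nonneg G (by positivity) hq1 y)
    (by rw [(isProb_mu G (by positivity) hq1 hx).sum_eq_one,
      (isProb_mu G (by positivity) hq1 hy).sum_eq_one])
    (mu_lcm_dichotomy G hx hy) hπ0 hπr hπc

end FiniteGraph

section CostLowerBound

variable {G : SimpleGraph V} {μ ν : V → ℝ} {π : V → V → ℝ}

lemma finsum_dist_mul_eq_zero (hconn : G.Connected) (hπ : IsCoupling μ ν π) {z : V}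
    (hz : μ z = 0) : ∑ᶠ w, (G.dist z w : ℝ) * π z w = 0 := by
  by_cases hfin : (Function.support (π z)).Finite
  · have hrow : ∑ w ∈ hfin.toFinset, π z w = 0 := by
      rw [← finsum_eq_sum_of_support_subset _ hfin.coe_toFinset.ge, hπ.2.1 z, hz]
    have hzero : ∀ w, π z w = 0 := fun w => by
      by_cases hw : w ∈ hfin.toFinset
      · exact (Finset.sum_eq_zero_iff_of_nonneg fun i _ => hπ.1 z i).1 hrow w hw
      · simpa using hw
    simp [hzero]
  · -- a row with infinite support is a junk row: its sum and its cost are both `0`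
    refine finsum_of_infinite_support
      ((Set.Infinite.sdiff hfin (Set.finite_singleton z)).mono fun w hw => ?_)
    exact mul_ne_zero (Nat.cast_ne_zero.2 (hconn.pos_dist_of_ne (Ne.symm hw.2)).ne') hw.1

lemma sub_le_finsum_dist_mul (hconn : G.Connected) (hπ : IsCoupling μ ν π) {z : V}
    (hz : ν z ≠ 0) : μ z - ν z ≤ ∑ᶠ w, (G.dist z w : ℝ) * π z w := by
  classical
  have hν : 0 ≤ ν z := hπ.2.2 z ▸ finsum_nonneg fun a => hπ.1 a z
  by_cases hfin : (Function.support (π z)).Finite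
  · have hzz : π z z ≤ ν z := by
      have hcol : (Function.support fun a => π a z).Finite := by
        by_contra h
        exact hz (hπ.2.2 z ▸ finsum_of_infinite_support h)
      exact hπ.2.2 z ▸ single_le_finsum z hcol fun a => hπ.1 a z
    have hsub : Function.support (fun w => (G.dist z w : ℝ) * π z w) ⊆ hfin.toFinset :=
      fun w hw => by simpa using right_ne_zero_of_mul hw
    rw [← hπ.2.1 z, finsum_eq_sum_of_support_subset _ hfin.coe_toFinset.ge,
      finsum_eq_sum_of_support_subset _ hsub]
    have hterm : ∀ w, π z w ≤ (if w = z then π z z else 0) + (G.dist z w : ℝ) * π z w := by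
      intro w
      split_ifs with hw
      · subst hw; simp
      · have : (1 : ℝ) ≤ G.dist z w := by exact_mod_cast hconn.pos_dist_of_ne (Ne.symm hw)
        nlinarith [hπ.1 z w]
    have hdiag : ∑ w ∈ hfin.toFinset, (if w = z then π z z else 0) ≤ π z z := by
      rw [Finset.sum_ite_eq']
      split_ifs
      exacts [le_rfl, hπ.1 z z]
    have := Finset.sum_le_sum fun w (_ : w ∈ hfin.toFinset) => hterm w
    rw [Finset.sum_add_distrib] at this
    linarith
  · rw [← hπ.2.1 z, finsum_of_infinite_support hfin]
    linarith [finsum_nonneg fun w => mul_nonneg (Nat.cast_nonneg (G.dist z w)) (hπ.1 z w)]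

lemma sum_max_sub_le_cost (hconn : G.Connected) (hμ : (Function.support μ).Finite)
    (hπ : IsCoupling μ ν π) (s : Finset V) (hs : ∀ z ∈ s, ν z ≠ 0) :
    ∑ z ∈ s, max 0 (μ z - ν z) ≤ cost G π := by
  classical
  set f : V → ℝ := fun z => ∑ᶠ w, (G.dist z w : ℝ) * π z w
  have hf0 : ∀ z, 0 ≤ f z := fun z =>
    finsum_nonneg fun w => mul_nonneg (Nat.cast_nonneg _) (hπ.1 z w)
  have hsupp : Function.support f ⊆ ↑(s ∪ hμ.toFinset) := fun z hz => by
    simp only [Finset.coe_union, Set.Finite.coe_toFinset]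
    exact Or.inr fun h => hz (finsum_dist_mul_eq_zero hconn hπ h)
  calc ∑ z ∈ s, max 0 (μ z - ν z) ≤ ∑ z ∈ s, f z :=
        Finset.sum_le_sum fun z hz => max_le (hf0 z) (sub_le_finsum_dist_mul hconn hπ (hs z hz))
    _ ≤ ∑ z ∈ s ∪ hμ.toFinset, f z :=
        Finset.sum_le_sum_of_subset_of_nonneg Finset.subset_union_left fun z _ _ => hf0 z
    _ = cost G π := (finsum_eq_sum_of_support_subset f hsupp).symm

end CostLowerBound

section InfiniteGraph

variable {G : SimpleGraph V}

open Classical in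
/-- In an infinite graph a row or column with infinite support has `∑ᶠ = 0`. Padding all rows
and all massless columns outside `K` with ones, and letting one extra row `a ∉ K` supply what the
plan `R` on `K` leaves unfilled, turns `R` into a coupling whose cost is that of `R`. -/
noncomputable def padPlan (K : Finset V) (a : V) (ν : V → ℝ) (R : V → V → ℝ) : V → V → ℝ :=
  fun z w => if z ∈ K then R z w else if ν w = 0 then 1
    else if z = a then ν w - ∑ z' ∈ K, R z' w else 0

lemma support_padPlan_subset {K : Finset V} {a : V} {ν : V → ℝ} {R : V → V → ℝ}
    (hRK : ∀ z w, R z w ≠ 0 → z ∈ K ∧ w ∈ K) {z : V} (hz : z ∈ K) :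
    Function.support (padPlan K a ν R z) ⊆ K := fun w hw =>
  (hRK z w (by simpa [padPlan, hz] using hw)).2

lemma isCoupling_padPlan [Infinite V] {μ ν : V → ℝ} {R : V → V → ℝ} {K : Finset V} {a : V}
    (ha : a ∉ K) (hμK : ∀ z ∉ K, μ z = 0) (hνK : ∀ w ∉ K, ν w = 0) (hR0 : ∀ z w, 0 ≤ R z w)
    (hRK : ∀ z w, R z w ≠ 0 → z ∈ K ∧ w ∈ K) (hrow : ∀ z ∈ K, ∑ w ∈ K, R z w = μ z)
    (hcol : ∀ w, ν w ≠ 0 → ∑ z ∈ K, R z w ≤ ν w) : IsCoupling μ ν (padPlan K a ν R) := by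
  classical
  have hKc : (↑K : Set V)ᶜ.Infinite := K.finite_toSet.infinite_compl
  refine ⟨fun z w => ?_, fun z => ?_, fun w => ?_⟩
  · simp only [padPlan]
    split_ifs with h1 h2 h3
    exacts [hR0 z w, zero_le_one, sub_nonneg.2 (hcol w h2), le_rfl]
  · by_cases hz : z ∈ K
    · rw [finsum_eq_sum_of_support_subset _ (support_padPlan_subset hRK hz), ← hrow z hz]
      exact Finset.sum_congr rfl fun w _ => if_pos hz
    · rw [hμK z hz]
      exact finsum_of_infinite_support (hKc.mono fun w hw => by simp [padPlan, hz, hνK w hw])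
  · by_cases hw : ν w = 0
    · rw [hw]
      exact finsum_of_infinite_support (hKc.mono fun z hz => by simp_all [padPlan])
    · have hsub : Function.support (fun z => padPlan K a ν R z w) ⊆ ↑(insert a K) :=
        fun z hz => by
          by_contra h
          simp only [Finset.coe_insert, Set.mem_insert_iff, Finset.mem_coe, not_or] at h
          simp [padPlan, h, hw] at hz
      have hK : ∑ z ∈ K, padPlan K a ν R z w = ∑ z ∈ K, R z w :=
        Finset.sum_congr rfl fun z hz => by simp [padPlan, hz]
      rw [finsum_eq_sum_of_support_subset _ hsub, Finset.sum_insert ha, hK]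
      simp [padPlan, ha, hw]

lemma cost_padPlan [Infinite V] (hconn : G.Connected) {ν : V → ℝ} {R : V → V → ℝ}
    {K : Finset V} (a : V) (hνK : ∀ w ∉ K, ν w = 0) (hRK : ∀ z w, R z w ≠ 0 → z ∈ K ∧ w ∈ K) :
    cost G (padPlan K a ν R) = ∑ z ∈ K, ∑ w ∈ K, (G.dist z w : ℝ) * R z w := by
  classical
  have hrow : ∀ z, ∑ᶠ w, (G.dist z w : ℝ) * padPlan K a ν R z w =
      if z ∈ K then ∑ w ∈ K, (G.dist z w : ℝ) * R z w else 0 := by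
    intro z
    split_ifs with hz
    · rw [finsum_eq_sum_of_support_subset _
        ((Function.support_mul_subset_right _ _).trans (support_padPlan_subset hRK hz))]
      exact Finset.sum_congr rfl fun w _ => by simp [padPlan, hz]
    · refine finsum_of_infinite_support
        ((K.finite_toSet.infinite_compl.sdiff (Set.finite_singleton z)).mono fun w hw => ?_)
      have hdist : (G.dist z w : ℝ) ≠ 0 :=
        Nat.cast_ne_zero.2 (hconn.pos_dist_of_ne (Ne.symm hw.2)).ne'
      simp only [Function.mem_support, padPlan]
      rwa [if_neg hz, if_pos (hνK w hw.1), mul_one]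
  rw [cost, finsum_congr hrow, finsum_eq_sum_of_support_subset _ (s := K) fun z hz => by
    by_contra h; exact hz (if_neg h)]
  exact Finset.sum_congr rfl fun z hz => if_pos hz

lemma W1_le_of_excess [Infinite V] (hconn : G.Connected) {μ ν e : V → ℝ} (K : Finset V) {t : V}
    (ht : t ∈ K) (hνt : ν t = 0) (hμK : ∀ z ∉ K, μ z = 0) (hνK : ∀ w ∉ K, ν w = 0)
    (he0 : ∀ z, 0 ≤ e z) (heμ : ∀ z, e z ≤ μ z) (hν : ∀ w, ν w ≠ 0 → μ w - e w ≤ ν w) :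
    W1 G μ ν ≤ ∑ z ∈ K, (G.dist z t : ℝ) * e z := by
  classical
  -- keep `μ - e` in place and ship the excess `e` to the sink `t`
  set R : V → V → ℝ := fun z w => (if w = z then μ z - e z else 0) + if w = t then e z else 0
  have hRK : ∀ z w, R z w ≠ 0 → z ∈ K ∧ w ∈ K := fun z w h => by
    by_contra hc
    apply h
    by_cases hz : z ∈ K
    · have hwz : w ≠ z := fun h => hc ⟨hz, h ▸ hz⟩
      have hwt : w ≠ t := fun h => hc ⟨hz, h ▸ ht⟩
      simp [R, hwz, hwt]
    · have he : e z = 0 := le_antisymm (hμK z hz ▸ heμ z) (he0 z)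
      simp [R, hμK z hz, he]
  obtain ⟨a, ha⟩ := Infinite.exists_notMem_finset K
  have hcoupling := isCoupling_padPlan ha hμK hνK
    (fun z w => add_nonneg (by split_ifs <;> linarith [heμ z]) (by split_ifs <;> simp [he0 z]))
    hRK (fun z hz => by simp [Finset.sum_add_distrib, hz, ht])
    fun w hw => by
      have hwt : w ≠ t := by rintro rfl; exact hw hνt
      simp only [Finset.sum_ite_eq, hwt, if_false, add_zero]
      split_ifs with hwK
      exacts [hν w hw, absurd (hνK w hwK) hw]
  refine (W1_le_cost G hcoupling).trans_eq ((cost_padPlan hconn a hνK hRK).trans ?_)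
  refine Finset.sum_congr rfl fun z hz => ?_
  simp [R, mul_add, Finset.sum_add_distrib, hz, ht]

end InfiniteGraph

section NonAdjacent

variable (G : SimpleGraph V) [G.LocallyFinite] {x y : V}

lemma adj_and_adj_of_mu_ne_zero (hxy : x ≠ y) (hnadj : ¬G.Adj x y) {p : ℝ} {z : V}
    (hx : mu G p x z ≠ 0) (hy : mu G p y z ≠ 0) : G.Adj x z ∧ G.Adj y z := by
  have hzx : z ≠ x := by
    rintro rfl
    exact hy (mu_of_not_adj G p hxy fun h => hnadj h.symm)
  have hzy : z ≠ y := by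
    rintro rfl
    exact hx (mu_of_not_adj G p (Ne.symm hxy) hnadj)
  exact ⟨by_contra fun h => hx (mu_of_not_adj G p hzx h),
    by_contra fun h => hy (mu_of_not_adj G p hzy h)⟩

open Classical in
lemma sum_max_sub_mu_le_W1 (hconn : G.Connected) (hxy : x ≠ y) {p : ℝ} (hp0 : 0 ≤ p)
    (hp1 : p < 1) :
    ∑ z ∈ G.neighborFinset x ∩ G.neighborFinset y, max 0 (mu G p x z - mu G p y z) ≤
      W1 G (mu G p x) (mu G p y) := by
  have hμ := isProb_mu G hp0 hp1.le ((hconn.preconnected x y).degree_pos_left hxy)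
  have hν := isProb_mu G hp0 hp1.le ((hconn.preconnected x y).degree_pos_right hxy)
  refine le_W1 G (hμ.exists_isCoupling hν) fun π hπ =>
    sum_max_sub_le_cost hconn hμ.2.1 hπ _ fun z hz => ?_
  have hyz : G.Adj y z := (G.mem_neighborFinset y z).1 (Finset.mem_inter.1 hz).2
  have := hyz.degree_pos_left
  rw [mu_of_adj G p hyz]
  have : 0 < 1 - p := by linarith
  positivity

open Classical in
lemma W1_mu_le_sum_max_sub [Infinite V] (hconn : G.Connected) (hxy : x ≠ y) (hnadj : ¬G.Adj x y)
    {p : ℝ} (hp0 : 0 ≤ p) (hp1 : p ≤ 1) :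
    W1 G (mu G p x) (mu G p y) ≤
      ∑ z ∈ G.neighborFinset x ∩ G.neighborFinset y, max 0 (mu G p x z - mu G p y z) := by
  set s := G.neighborFinset x ∩ G.neighborFinset y
  set K := insert x (insert y (G.neighborFinset x ∪ G.neighborFinset y))
  have hsK : s ⊆ K := fun z hz => by simp_all [s, K]
  have hK : ∀ v ∈ ({x, y} : Finset V), ∀ z ∉ K, mu G p v z = 0 := fun v hv z hz => by
    simp only [K, Finset.mem_insert, Finset.mem_union, SimpleGraph.mem_neighborFinset,
      not_or] at hz
    simp only [Finset.mem_insert, Finset.mem_singleton] at hv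
    rcases hv with rfl | rfl
    exacts [mu_of_not_adj G p hz.1 hz.2.2.1, mu_of_not_adj G p hz.2.1 hz.2.2.2]
  have hμ0 := mu_nonneg G hp0 hp1 x
  have hν0 := mu_nonneg G hp0 hp1 y
  refine (W1_le_of_excess hconn K (Finset.mem_insert_self x _)
    (mu_of_not_adj G p hxy fun h => hnadj h.symm) (hK x (by simp)) (hK y (by simp))
    (e := fun z => if z ∈ s then max 0 (mu G p x z - mu G p y z) else 0)
    (fun z => by split_ifs <;> simp) (fun z => ?_) (fun w hw => ?_)).trans_eq ?_
  · split_ifs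
    exacts [max_le (hμ0 z) (by linarith [hν0 z]), hμ0 z]
  · split_ifs with hws
    · linarith [le_max_right 0 (mu G p x w - mu G p y w)]
    · have : mu G p x w = 0 := by_contra fun h =>
        hws (by simpa [s] using adj_and_adj_of_mu_ne_zero G hxy hnadj h hw)
      linarith [hν0 w]
  · have hdist : ∀ z ∈ s, (G.dist z x : ℝ) = 1 := fun z hz => by
      have : G.Adj x z := (G.mem_neighborFinset x z).1 (Finset.mem_inter.1 hz).1
      exact_mod_cast SimpleGraph.dist_eq_one_iff_adj.2 this.symm
    simp only [mul_ite, mul_zero]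
    rw [Finset.sum_ite_mem, Finset.inter_eq_right.2 hsK]
    exact Finset.sum_congr rfl fun z hz => by rw [hdist z hz, one_mul]

open Classical in
theorem W1_mu_of_infinite [Infinite V] (hconn : G.Connected) (hd : 2 ≤ G.dist x y) {p : ℝ}
    (hp0 : 0 ≤ p) (hp1 : p < 1) :
    W1 G (mu G p x) (mu G p y) = (1 - p) * ((G.neighborFinset x ∩ G.neighborFinset y).card *
      max 0 (1 / (G.degree x : ℝ) - 1 / G.degree y)) := by
  have hxy : x ≠ y := by rintro rfl; simp at hd
  have hnadj : ¬G.Adj x y := fun h => by rw [SimpleGraph.dist_eq_one_iff_adj.2 h] at hd; omega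
  have hdiff : ∀ z ∈ G.neighborFinset x ∩ G.neighborFinset y, max 0 (mu G p x z - mu G p y z) =
      (1 - p) * max 0 (1 / (G.degree x : ℝ) - 1 / G.degree y) := fun z hz => by
    simp only [Finset.mem_inter, SimpleGraph.mem_neighborFinset] at hz
    rw [mu_of_adj G p hz.1, mu_of_adj G p hz.2, mul_max_of_nonneg _ _ (by linarith), mul_zero]
    ring_nf
  rw [← mul_left_comm, ← nsmul_eq_mul, ← Finset.sum_const, ← Finset.sum_congr rfl hdiff]
  exact le_antisymm (W1_mu_le_sum_max_sub G hconn hxy hnadj hp0 hp1.le)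
    (sum_max_sub_mu_le_W1 G hconn hxy hp0 hp1)

end NonAdjacent

theorem exists_affine_W1_mu (G : SimpleGraph V) [G.LocallyFinite] (hconn : G.Connected) {x y : V}
    (hd : 2 ≤ G.dist x y) :
    ∃ a b : ℝ, ∀ p ∈ Set.Icc (0 : ℝ) (1 / (1 + (Nat.lcm (G.degree x) (G.degree y) : ℝ))),
      W1 G (mu G p x) (mu G p y) = a * p + b := by
  classical
  have hxy : x ≠ y := by rintro rfl; simp at hd
  have hx := (hconn.preconnected x y).degree_pos_left hxy
  have hy := (hconn.preconnected x y).degree_pos_right hxy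
  have hl : (1 : ℝ) ≤ Nat.lcm (G.degree x) (G.degree y) := by exact_mod_cast Nat.lcm_pos hx hy
  have hq1 : 1 / (1 + (Nat.lcm (G.degree x) (G.degree y) : ℝ)) < 1 := by
    rw [div_lt_one (by linarith)]
    linarith
  rcases finite_or_infinite V with hV | hV
  · have := Fintype.ofFinite V
    set W := fun p => W1 G (mu G p x) (mu G p y)
    exact ⟨(1 + Nat.lcm (G.degree x) (G.degree y)) *
      (W (1 / (1 + (Nat.lcm (G.degree x) (G.degree y) : ℝ))) - W 0), W 0,
      fun p hp => (W1_mu_eq_chord G hx hy hp.1 hp.2).trans (by ring)⟩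
  · set C := (G.neighborFinset x ∩ G.neighborFinset y).card *
      max 0 (1 / (G.degree x : ℝ) - 1 / G.degree y)
    exact ⟨-C, C, fun p hp => (W1_mu_of_infinite G hconn hd hp.1 (hp.2.trans_lt hq1)).trans
      (by ring)⟩

/-- the idleness function is linear on `[0, 1/(1 + lcm(d_x, d_y))]`;
every critical point is at least `1/(1 + lcm(d_x, d_y))`. -/
theorem first_linear_part {V : Type*} (G : SimpleGraph V)
    (hconn : G.Connected) [G.LocallyFinite]
    (x y : V) (δ : ℕ) (hδ : G.dist x y = δ) (hδ2 : 2 ≤ δ) :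
    (∃ a b : ℝ, ∀ p ∈ Set.Icc (0 : ℝ) (1 / (1 + (Nat.lcm (G.degree x) (G.degree y) : ℝ))),
        kappa G p x y = a * p + b) ∧
      ∀ pstar ∈ Set.Ioo (0 : ℝ) 1,
        derivWithin (fun p => kappa G p x y) (Set.Iic pstar) pstar ≠
            derivWithin (fun p => kappa G p x y) (Set.Ici pstar) pstar →
          1 / (1 + (Nat.lcm (G.degree x) (G.degree y) : ℝ)) ≤ pstar := by
  obtain ⟨a, b, hW⟩ := exists_affine_W1_mu G hconn (hδ ▸ hδ2)
  have hκ : ∀ p ∈ Set.Icc (0 : ℝ) (1 / (1 + (Nat.lcm (G.degree x) (G.degree y) : ℝ))),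
      kappa G p x y = -a / δ * p + (1 - b / δ) := fun p hp => by
    rw [kappa, hW p hp, hδ]
    ring
  refine ⟨⟨_, _, hκ⟩, fun pstar hps hne => ?_⟩
  by_contra! hlt
  have hev : (fun p => kappa G p x y) =ᶠ[nhds pstar] fun p => -a / δ * p + (1 - b / δ) :=
    Filter.eventually_of_mem (Ioo_mem_nhds hps.1 hlt) fun p hp => hκ p ⟨hp.1.le, hp.2.le⟩
  have hdiff : DifferentiableAt ℝ (fun p => kappa G p x y) pstar :=
    (differentiableAt_id.const_mul _ |>.add_const _).congr_of_eventuallyEq hev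
  exact hne (by rw [hdiff.derivWithin (uniqueDiffWithinAt_Iic _),
    hdiff.derivWithin (uniqueDiffWithinAt_Ici _)])

end OllivierLong
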